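/- Let n ≥ 3 and let Ω ⊂ ℝⁿ be a bounded open set with Lipschitz boundary, x₀ ∈ ∂Ω, and for small τ > 0 let y_τ ∉ Ω̄ satisfy dist(y_τ, ∂Ω) = |y_τ - x₀| = τ. Then there exist constants c > 0 and τ₁ > 0 such that for all τ ∈ (0, τ₁), ∫_{Ω ∩ (B(y_τ, 2τ) \ B(y_τ, τ))} |x - y_τ|^{2 - 2n} dx ≥ c τ^{2 - n}. -/

import Mathlib

open MeasureTheory Metric Set

/-- A local Lipschitz boundary condition at a boundary point `x₀`, expressed through a uniform
interior cone condition: there are a unit direction `v`, a scale `ε` and an aperture `θ ∈ (0,1)`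
such that from every boundary point near `x₀`, the open cone of direction `v` and aperture `θ`
lies inside `Ω` at scale `ε`. -/
def LipschitzBoundaryAt {n : ℕ} (Ω : Set (EuclideanSpace ℝ (Fin n)))
    (x₀ : EuclideanSpace ℝ (Fin n)) : Prop :=
  ∃ (v : EuclideanSpace ℝ (Fin n)) (ε θ : ℝ), ‖v‖ = 1 ∧ 0 < ε ∧ θ ∈ Set.Ioo (0:ℝ) 1 ∧
    ∀ x ∈ frontier Ω ∩ Metric.ball x₀ ε, ∀ z ∈ Metric.ball x ε,
      θ * ‖z - x‖ < (inner ℝ v (z - x) : ℝ) → z ∈ Ω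

set_option maxHeartbeats 1000000 in
/-- lower bound `∫_{Ω ∩ (B(y_τ,2τ)\B(y_τ,τ))} |x-y_τ|^{2-2n} dx ≥ c τ^{2-n}`
for points `y_τ ∉ Ω̄` at distance `τ` from the Lipschitz boundary, realized at `x₀ ∈ ∂Ω`. -/
theorem stmt3 (n : ℕ) (hn : 3 ≤ n) (Ω : Set (EuclideanSpace ℝ (Fin n)))
    (hΩo : IsOpen Ω) (hΩb : Bornology.IsBounded Ω)
    (x₀ : EuclideanSpace ℝ (Fin n)) (hx₀ : x₀ ∈ frontier Ω)
    (hLip : LipschitzBoundaryAt Ω x₀)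
    (δ : ℝ) (hδ : 0 < δ) (y : ℝ → EuclideanSpace ℝ (Fin n))
    (hy : ∀ τ ∈ Set.Ioo 0 δ, y τ ∉ closure Ω ∧
      Metric.infDist (y τ) (frontier Ω) = τ ∧ dist (y τ) x₀ = τ) :
    ∃ c > 0, ∃ τ₁ ∈ Set.Ioc (0:ℝ) δ, ∀ τ ∈ Set.Ioo 0 τ₁,
      c * τ ^ ((2:ℝ) - n) ≤
        ∫ x in Ω ∩ (Metric.ball (y τ) (2 * τ) \ Metric.ball (y τ) τ),
          ‖x - y τ‖ ^ ((2:ℝ) - 2 * n) := by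
  classical
  obtain ⟨v, ε, θ, hv, hε, hθ, hcone⟩ := hLip
  haveI : Nonempty (Fin n) := ⟨⟨0, by omega⟩⟩
  have hωfin : volume (ball (0 : EuclideanSpace ℝ (Fin n)) 1) ≠ ⊤ := measure_ball_lt_top.ne
  set ω := (volume (ball (0 : EuclideanSpace ℝ (Fin n)) 1)).toReal with hωdef
  have hωpos : 0 < ω := ENNReal.toReal_pos (measure_ball_pos _ _ one_pos).ne' hωfin
  obtain ⟨hθ0, hθ1⟩ := hθ
  set k : ℝ := (1 - θ) / 8 with hkdef
  have hkpos : 0 < k := by rw [hkdef]; linarith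
  have hnR : (3:ℝ) ≤ (n:ℝ) := by exact_mod_cast hn
  have he : (2:ℝ) - 2*n ≤ 0 := by linarith
  refine ⟨(2:ℝ) ^ ((2:ℝ) - 2*n) * k ^ n * ω, by positivity, min δ ε,
    ⟨lt_min hδ hε, min_le_left _ _⟩, ?_⟩
  intro τ hτ
  obtain ⟨hτ0, hτ1⟩ := hτ
  have hτδ : τ < δ := lt_of_lt_of_le hτ1 (min_le_left _ _)
  have hτε : τ < ε := lt_of_lt_of_le hτ1 (min_le_right _ _)
  obtain ⟨hycl, hyfr, hyx⟩ := hy τ ⟨hτ0, hτδ⟩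
  set p := y τ with hp
  -- the small ball around p misses Ω
  have hdisj : ∀ q ∈ Metric.ball p τ, q ∉ Ω := by
    intro q hq hqΩ
    have hsub : Metric.ball p τ ⊆ Ω ∪ (closure Ω)ᶜ := by
      intro r hr
      by_contra h
      simp only [mem_union, not_or, mem_compl_iff, not_not] at h
      have hrfr : r ∈ frontier Ω := by
        rw [hΩo.frontier_eq]
        exact ⟨h.2, h.1⟩
      have h1 : Metric.infDist p (frontier Ω) ≤ dist p r :=
        Metric.infDist_le_dist_of_mem hrfr
      rw [hyfr, dist_comm] at h1
      exact absurd (lt_of_le_of_lt h1 hr) (lt_irrefl τ)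
    have hball : Metric.ball p τ ⊆ Ω :=
      (convex_ball p τ).isPreconnected.subset_left_of_subset_union hΩo
        isClosed_closure.isOpen_compl
        (disjoint_compl_right.mono_left subset_closure) hsub ⟨q, hq, hqΩ⟩
    exact hycl (subset_closure (hball (mem_ball_self hτ0)))
  set z := x₀ + (τ/2) • v with hzdef
  have hzx : z - x₀ = (τ/2) • v := by rw [hzdef]; abel
  have hzn : ‖z - x₀‖ = τ/2 := by
    rw [hzx, norm_smul, hv, mul_one, Real.norm_eq_abs, abs_of_pos (by linarith)]
  -- the ball around z is within Ω
  have hballΩ : Metric.ball z (k*τ) ⊆ Ω := by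
    intro w hw
    have hwz : ‖w - z‖ < k*τ := by rwa [mem_ball, dist_eq_norm] at hw
    have hwx : ‖w - x₀‖ ≤ ‖w - z‖ + τ/2 := by
      calc ‖w - x₀‖ = ‖(w - z) + (z - x₀)‖ := by rw [sub_add_sub_cancel]
      _ ≤ ‖w - z‖ + ‖z - x₀‖ := norm_add_le _ _
      _ = ‖w - z‖ + τ/2 := by rw [hzn]
    have hinner : (inner ℝ v (w - x₀) : ℝ) = τ/2 + inner ℝ v (w - z) := by
      have hws : w - x₀ = (w - z) + (z - x₀) := by abel
      rw [hws, inner_add_right, hzx, real_inner_smul_right,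
        real_inner_self_eq_norm_sq, hv]
      ring
    have habs : |(inner ℝ v (w - z) : ℝ)| ≤ ‖w - z‖ := by
      have h := abs_real_inner_le_norm v (w - z)
      rwa [hv, one_mul] at h
    have habs' := abs_le.mp habs
    apply hcone x₀ ⟨hx₀, mem_ball_self hε⟩ w
    · rw [mem_ball, dist_eq_norm]
      nlinarith [norm_nonneg (w - z)]
    · rw [hinner]
      nlinarith [norm_nonneg (w - z), norm_nonneg (w - x₀),
        mul_le_mul_of_nonneg_left hwx hθ0.le]
  -- the ball around z is within the big ball
  have hball2 : Metric.ball z (k*τ) ⊆ Metric.ball p (2*τ) := by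
    intro w hw
    rw [mem_ball] at hw ⊢
    have h4 : dist w p ≤ dist w z + dist z x₀ + dist x₀ p := dist_triangle4 w z x₀ p
    have hd2 : dist z x₀ = τ/2 := by rw [dist_eq_norm, hzn]
    have hd3 : dist x₀ p = τ := by rw [dist_comm]; exact hyx
    nlinarith
  set S := Ω ∩ (Metric.ball p (2*τ) \ Metric.ball p τ) with hSdef
  have hsubS : Metric.ball z (k*τ) ⊆ S := fun w hw =>
    ⟨hballΩ hw, hball2 hw, fun hbad => hdisj w hbad (hballΩ hw)⟩
  set f : EuclideanSpace ℝ (Fin n) → ℝ := fun x => ‖x - p‖ ^ ((2:ℝ) - 2*n) with hfdef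
  have hfm : AEStronglyMeasurable f volume := by
    have hr : Measurable (fun t : ℝ => t ^ ((2:ℝ) - 2*n)) := measurable_id.pow_const _
    have hm : Measurable (fun x : EuclideanSpace ℝ (Fin n) => ‖x - p‖) :=
      (measurable_id.sub measurable_const).norm
    exact (hr.comp hm).aestronglyMeasurable
  have hfnn : ∀ x, 0 ≤ f x := fun x => Real.rpow_nonneg (norm_nonneg _) _
  have hSmeas : MeasurableSet S :=
    hΩo.measurableSet.inter (measurableSet_ball.diff measurableSet_ball)
  have hSfin : volume S ≠ ⊤ :=
    ((measure_mono (inter_subset_right.trans diff_subset)).trans_lt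
      measure_ball_lt_top).ne
  have hSlow : ∀ x ∈ S, τ ≤ ‖x - p‖ := by
    intro x hx
    have := hx.2.2
    rw [mem_ball, dist_eq_norm] at this
    linarith [not_lt.mp this]
  have hint : IntegrableOn f S volume := by
    apply Measure.integrableOn_of_bounded hSfin hfm (M := τ ^ ((2:ℝ) - 2*n))
    filter_upwards [ae_restrict_mem hSmeas] with x hx
    rw [Real.norm_eq_abs, abs_of_nonneg (hfnn x)]
    exact Real.rpow_le_rpow_of_nonpos hτ0 (hSlow x hx) he
  have hstep1 : ∫ x in Metric.ball z (k*τ), f x ≤ ∫ x in S, f x :=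
    setIntegral_mono_set hint (Filter.Eventually.of_forall hfnn)
      (HasSubset.Subset.eventuallyLE hsubS)
  have hstep2 : ((2*τ) ^ ((2:ℝ)-2*n)) * (volume (Metric.ball z (k*τ))).toReal ≤
      ∫ x in Metric.ball z (k*τ), f x := by
    have hc : ∫ _x in Metric.ball z (k*τ), ((2*τ) ^ ((2:ℝ)-2*n) : ℝ) =
        (volume (Metric.ball z (k*τ))).toReal * ((2*τ) ^ ((2:ℝ)-2*n)) := by
      rw [setIntegral_const, smul_eq_mul, measureReal_def]
    rw [mul_comm, ← hc]
    apply setIntegral_mono_on (integrableOn_const measure_ball_lt_top.ne)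
      (hint.mono_set hsubS) measurableSet_ball
    intro x hx
    have hxS := hsubS hx
    have h1 : ‖x - p‖ ≤ 2*τ := by
      have := hball2 hx
      rw [mem_ball, dist_eq_norm] at this
      linarith
    have h2 : 0 < ‖x - p‖ := lt_of_lt_of_le hτ0 (hSlow x hxS)
    exact Real.rpow_le_rpow_of_nonpos h2 h1 he
  have hvol : (volume (Metric.ball z (k*τ))).toReal = (k*τ)^n * ω := by
    rw [Measure.addHaar_ball _ z (by positivity), finrank_euclideanSpace_fin,
      ENNReal.toReal_mul, ENNReal.toReal_ofReal (by positivity), hωdef]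
  have hτn : τ ^ ((2:ℝ)-2*n) * τ ^ (n:ℝ) = τ ^ ((2:ℝ) - n) := by
    rw [← Real.rpow_add hτ0]; ring_nf
  have heq : ((2*τ) ^ ((2:ℝ)-2*n)) * ((k*τ)^n * ω) =
      ((2:ℝ) ^ ((2:ℝ) - 2*n) * k ^ n * ω) * τ ^ ((2:ℝ) - n) := by
    rw [Real.mul_rpow (by norm_num) hτ0.le, mul_pow, ← Real.rpow_natCast τ n, ← hτn]
    ring
  calc ((2:ℝ) ^ ((2:ℝ) - 2*n) * k ^ n * ω) * τ ^ ((2:ℝ) - n)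
      = ((2*τ) ^ ((2:ℝ)-2*n)) * ((k*τ)^n * ω) := heq.symm
    _ = ((2*τ) ^ ((2:ℝ)-2*n)) * (volume (Metric.ball z (k*τ))).toReal := by rw [hvol]
    _ ≤ ∫ x in Metric.ball z (k*τ), f x := hstep2
    _ ≤ ∫ x in S, f x := hstep1
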